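/- Let (R, m, k) be an F-finite Noetherian local ring of characteristic p > 0, and write F^e_* R = R^{⊕ a_e} ⊕ M_e as R-modules where M_e has no free direct summands. Let I_e = { r ∈ R : φ(F^e_* r) ∈ m for all φ ∈ Hom_R(F^e_* R, R) }. Then a_e = length_R( F^e_*(R/I_e) ), i.e., a_e equals length_R( Hom_R(F^e_* R, R) / Hom_R(F^e_* R, m) ). -/

import Mathlib

set_option linter.unusedVariables false

open Filter IsLocalRing

/-- `I^[q]` : the ideal generated by the `q`-th powers of the elements of `I`. -/
def Ideal.bracketPow {R : Type*} [CommSemiring R] (I : Ideal R) (q : ℕ) : Ideal R :=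
  Ideal.span ((fun x => x ^ q) '' (I : Set R))

/-- The length of the `R`-module `M` (as a natural number; junk value when infinite),
computed as the Krull dimension of the lattice of submodules of `M`. -/
noncomputable def mlength (R M : Type*) [Ring R] [AddCommGroup M] [Module R M] : ℕ :=
  (WithBot.unbotD 0 (Order.krullDim (Submodule R M))).toNat

/-- The length of `(R ⧸ I) ⊗_R M`. -/
noncomputable def lenTensor (R : Type*) [CommRing R] (M : Type*) [AddCommGroup M] [Module R M]
    (I : Ideal R) : ℕ :=
  mlength R (TensorProduct R (R ⧸ I) M)

/-- Type synonym: `M` viewed as an `R`-module via the `e`-th iterate of Frobenius,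
i.e. `F^e_* M`. -/
def FrobMod (R : Type*) (p e : ℕ) (M : Type*) : Type _ := M

/-- `F^e_* m`, the element of `F^e_* M` corresponding to `m : M`. -/
def FrobMod.of (R : Type*) (p e : ℕ) {M : Type*} (m : M) : FrobMod R p e M := m

instance FrobMod.instAddCommGroup {R M : Type*} {p e : ℕ} [AddCommGroup M] :
    AddCommGroup (FrobMod R p e M) := inferInstanceAs (AddCommGroup M)

noncomputable instance FrobMod.instModule {R : Type*} [CommSemiring R] {p e : ℕ} [ExpChar R p]
    {M : Type*} [AddCommGroup M] [Module R M] : Module R (FrobMod R p e M) :=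
  Module.compHom M (iterateFrobenius R p e)

/-- `M` has a free direct summand (isomorphic to `R`). -/
def HasFreeDirectSummand (R M : Type*) [CommRing R] [AddCommGroup M] [Module R M] : Prop :=
  ∃ N N' : Submodule R M, IsCompl N N' ∧ Nonempty (N ≃ₗ[R] R)

/-- `R` is `F`-finite: the Frobenius endomorphism is a finite ring homomorphism,
i.e. `F_* R` is a finitely generated `R`-module. -/
def FFinite (R : Type*) [CommRing R] (p : ℕ) [ExpChar R p] : Prop :=
  RingHom.Finite (frobenius R p)

/-- The set `I_e = { r : R | φ (F^e_* r) ∈ 𝔪 for all φ ∈ Hom_R (F^e_* R, R) }`. -/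
def splittingSet (R : Type*) [CommRing R] [IsLocalRing R] (p e : ℕ) [ExpChar R p] : Set R :=
  {r : R | ∀ φ : FrobMod R p e R →ₗ[R] R, φ (FrobMod.of R p e r) ∈ maximalIdeal R}

/-- `α = α(R) = log_p [k : k^p]`, encoded as `[k^{1/p} : k] = p ^ α` for the residue field `k`. -/
def IsAlphaOf (R : Type*) [CommRing R] [IsLocalRing R] (p : ℕ)
    [ExpChar (ResidueField R) p] (α : ℕ) : Prop :=
  Module.finrank (ResidueField R) (FrobMod (ResidueField R) p 1 (ResidueField R)) = p ^ α

/-- `b` records, for each `e`, a direct sum decomposition `F^e_* M ≅ R^{b e} ⊕ N_e`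
where `N_e` has no free direct summand; i.e. `b e` is the `e`-th Frobenius splitting
number of `M`. -/
def IsFrobSplittingNumbersOf (R : Type*) [CommRing R] (p : ℕ) [ExpChar R p]
    (M : Type*) [AddCommGroup M] [Module R M] (b : ℕ → ℕ) : Prop :=
  ∀ e : ℕ, ∃ Fe Ne : Submodule R (FrobMod R p e M),
    IsCompl Fe Ne ∧ Nonempty (Fe ≃ₗ[R] (Fin (b e) → R)) ∧ ¬ HasFreeDirectSummand R Ne

/-- `a e` is the `e`-th Frobenius splitting number of `R`:
`F^e_* R ≅ R^{a e} ⊕ M_e` with `M_e` having no free direct summand. -/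
def IsFrobSplittingNumbers (R : Type*) [CommRing R] (p : ℕ) [ExpChar R p] (a : ℕ → ℕ) : Prop :=
  IsFrobSplittingNumbersOf R p R a

/-- A local ring is regular if its maximal ideal is generated by `dim R` elements. -/
def RegularLocal (R : Type*) [CommRing R] [IsLocalRing R] : Prop :=
  ∃ s : Finset R, Ideal.span (s : Set R) = maximalIdeal R ∧
    (s.card : WithBot (WithTop ℕ)) = ringKrullDim R

/-- A local ring is Cohen–Macaulay if there is a regular sequence in the maximal ideal
of length `dim R`. -/
def CohenMacaulayLocal (R : Type*) [CommRing R] [IsLocalRing R] : Prop :=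
  ∃ rs : List R, (∀ r ∈ rs, r ∈ maximalIdeal R) ∧ RingTheory.Sequence.IsRegular R rs ∧
    (rs.length : WithBot (WithTop ℕ)) = ringKrullDim R

/-- `R` is strongly `F`-regular: for every `c` not in any minimal prime there are `e`
and `φ : F^e_* R → R` with `φ (F^e_* c) = 1`. -/
def StronglyFRegular (R : Type*) [CommRing R] (p : ℕ) [ExpChar R p] : Prop :=
  ∀ c : R, (∀ P ∈ minimalPrimes R, c ∉ P) →
    ∃ (e : ℕ) (φ : FrobMod R p e R →ₗ[R] R), φ (FrobMod.of R p e c) = 1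

/-- The submodule `Hom_R(F^e_* R, 𝔪)` of `Hom_R(F^e_* R, R)`. -/
def homIntoMax (R : Type*) [CommRing R] [IsLocalRing R] (p e : ℕ) [ExpChar R p] :
    Submodule R (FrobMod R p e R →ₗ[R] R) where
  carrier := {φ | ∀ x, φ x ∈ maximalIdeal R}
  add_mem' := by
    intro a b ha hb x
    rw [LinearMap.add_apply]
    exact add_mem (ha x) (hb x)
  zero_mem' := by
    intro x
    rw [LinearMap.zero_apply]
    exact zero_mem _
  smul_mem' := by
    intro c φ h x
    rw [LinearMap.smul_apply]
    exact Submodule.smul_mem _ c (h x)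

/-!
Let `π : F^e_* R → R^{a_e}` and `ι : R^{a_e} → F^e_* R` be the projection onto and the
inclusion of the free summand. Since the complement `M_e` has no free summand, every
`φ : F^e_* R → R` maps `M_e` into `𝔪`, so modulo `𝔪` the value `φ x` depends only on `π x`
and `φ ∘ ι`. Hence `x ∈ I_e` iff `π x ∈ 𝔪^{a_e}`, and `φ ∈ Hom(F^e_* R, 𝔪)` iff `φ ∘ ι` has
all coefficients in `𝔪`. Both quotients are therefore isomorphic to `k^{a_e}`, of length `a_e`.
-/

def FrobMod.map {R : Type*} [CommSemiring R] (p e : ℕ) [ExpChar R p] {M N : Type*}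
    [AddCommGroup M] [Module R M] [AddCommGroup N] [Module R N] (f : M →ₗ[R] N) :
    FrobMod R p e M →ₗ[R] FrobMod R p e N where
  toFun x := FrobMod.of R p e (f x)
  map_add' := f.map_add
  map_smul' r := f.map_smul (iterateFrobenius R p e r)

section Length

variable {R : Type*} [CommRing R]

theorem mlength_eq_toNat_length (M : Type*) [AddCommGroup M] [Module R M] :
    mlength R M = (Module.length R M).toNat := by
  rw [mlength, ← Module.coe_length, WithBot.unbotD_coe]

theorem LinearEquiv.mlength_eq {M N : Type*} [AddCommGroup M] [Module R M] [AddCommGroup N]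
    [Module R N] (f : M ≃ₗ[R] N) : mlength R M = mlength R N := by
  rw [mlength_eq_toNat_length, mlength_eq_toNat_length, f.length_eq]

theorem mlength_pi_residueField [IsLocalRing R] (n : ℕ) :
    mlength R (Fin n → ResidueField R) = n := by
  rw [mlength_eq_toNat_length, Module.length_eq_of_surjective residue_surjective,
    Module.length_eq_finrank, Module.finrank_fin_fun, ENat.toNat_natCast]

theorem mlength_eq_of_ker_eq_comap [IsLocalRing R] {N Q : Type*} [AddCommGroup N] [Module R N]
    [AddCommGroup Q] [Module R Q] {n : ℕ} (q : N →ₗ[R] Q) (hq : Function.Surjective q)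
    (f : N →ₗ[R] (Fin n → R)) (hf : Function.Surjective f)
    (hker : ∀ x, q x = 0 ↔ ∀ i, f x i ∈ maximalIdeal R) :
    mlength R Q = n := by
  let ξ := (Algebra.linearMap R (ResidueField R)).compLeft (Fin n) ∘ₗ f
  have hξ : Function.Surjective ξ := (residue_surjective.comp_left).comp hf
  have hkerξ : LinearMap.ker q = LinearMap.ker ξ := by
    ext x
    simp only [LinearMap.mem_ker, hker, ξ, funext_iff]
    simp [residue_eq_zero_iff]
  rw [((q.quotKerEquivOfSurjective hq).symm.trans
    ((Submodule.quotEquivOfEq _ _ hkerξ).trans (ξ.quotKerEquivOfSurjective hξ))).mlength_eq,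
    mlength_pi_residueField]

end Length

section FreeSummand

variable {R M : Type*} [CommRing R] [AddCommGroup M] [Module R M]

theorem hasFreeDirectSummand_of_leftInverse (s : R →ₗ[R] M) (φ : M →ₗ[R] R)
    (hφs : ∀ r, φ (s r) = r) : HasFreeDirectSummand R M := by
  have hs : Function.Injective s := Function.LeftInverse.injective hφs
  refine ⟨LinearMap.range s, LinearMap.ker (s.rangeRestrict ∘ₗ φ),
    LinearMap.isCompl_of_proj ?_, ⟨(LinearEquiv.ofInjective s hs).symm⟩⟩
  rintro ⟨_, r, rfl⟩
  exact Subtype.ext (by simp [hφs])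

theorem hasFreeDirectSummand_of_isUnit_apply (φ : M →ₗ[R] R) {x : M} (hx : IsUnit (φ x)) :
    HasFreeDirectSummand R M := by
  refine hasFreeDirectSummand_of_leftInverse
    (LinearMap.toSpanSingleton R M (((hx.unit⁻¹ : Rˣ) : R) • x)) φ fun r => ?_
  rw [LinearMap.toSpanSingleton_apply, map_smul, map_smul, smul_eq_mul, smul_eq_mul,
    hx.val_inv_mul, mul_one]

theorem apply_mem_maximalIdeal_of_not_hasFreeDirectSummand [IsLocalRing R]
    (h : ¬ HasFreeDirectSummand R M) (φ : M →ₗ[R] R) (x : M) : φ x ∈ maximalIdeal R :=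
  (mem_maximalIdeal _).2 fun hx => h (hasFreeDirectSummand_of_isUnit_apply φ hx)

end FreeSummand

theorem LinearMap.apply_eq_sum_mul_apply_single {R σ : Type*} [CommSemiring R] [Fintype σ]
    [DecidableEq σ] (ψ : (σ → R) →ₗ[R] R) (v : σ → R) :
    ψ v = ∑ i, v i * ψ (Pi.single i 1) := by
  conv_lhs => rw [pi_eq_sum_univ' v]
  simp only [map_sum, map_smul, smul_eq_mul]

theorem surjective_pi_applyₗ_single_of_leftInverse {R M : Type*} [CommRing R]
    [AddCommGroup M] [Module R M] {n : ℕ} {π : M →ₗ[R] (Fin n → R)}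
    {ι : (Fin n → R) →ₗ[R] M} (hπι : Function.LeftInverse π ι) :
    Function.Surjective
      (LinearMap.pi fun i => LinearMap.applyₗ (ι (Pi.single i 1)) : (M →ₗ[R] R) →ₗ[R] _) :=
  fun u => ⟨Fintype.linearCombination R u ∘ₗ π, funext fun i => by simp [hπι _]⟩

section Retraction

variable {R M : Type*} [CommRing R] [IsLocalRing R] [AddCommGroup M] [Module R M] {n : ℕ}

theorem exists_retraction_of_not_hasFreeDirectSummand {Fe Ne : Submodule R M}
    (hc : IsCompl Fe Ne) (g : Fe ≃ₗ[R] (Fin n → R)) (hNe : ¬ HasFreeDirectSummand R Ne) :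
    ∃ (π : M →ₗ[R] (Fin n → R)) (ι : (Fin n → R) →ₗ[R] M), Function.LeftInverse π ι ∧
      ∀ (φ : M →ₗ[R] R) (x : M), φ x - φ (ι (π x)) ∈ maximalIdeal R := by
  let π := g.toLinearMap ∘ₗ Fe.projectionOnto Ne hc
  let ι := Fe.subtype ∘ₗ g.symm.toLinearMap
  refine ⟨π, ι, fun v => by simp [π, ι], fun φ x => ?_⟩
  have hx : x - ι (π x) ∈ Ne := by
    have hιπ : ι (π x) = Fe.projection Ne hc x := by simp [π, ι]
    rw [hιπ, ← Submodule.projection_eq_self_sub_projection]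
    exact Submodule.projection_apply_mem _ _
  rw [← map_sub]
  exact apply_mem_maximalIdeal_of_not_hasFreeDirectSummand hNe (φ ∘ₗ Ne.subtype) ⟨_, hx⟩

variable (π : M →ₗ[R] (Fin n → R)) (ι : (Fin n → R) →ₗ[R] M)

theorem forall_apply_mem_maximalIdeal_iff
    (hres : ∀ (φ : M →ₗ[R] R) (x : M), φ x - φ (ι (π x)) ∈ maximalIdeal R) (x : M) :
    (∀ φ : M →ₗ[R] R, φ x ∈ maximalIdeal R) ↔ ∀ i, π x i ∈ maximalIdeal R := by
  refine ⟨fun h i => h (LinearMap.proj i ∘ₗ π), fun h φ => ?_⟩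
  have hι : φ (ι (π x)) ∈ maximalIdeal R := by
    rw [← LinearMap.comp_apply, LinearMap.apply_eq_sum_mul_apply_single]
    exact sum_mem fun i _ => Ideal.mul_mem_right _ _ (h i)
  simpa using add_mem (hres φ x) hι

theorem forall_apply_mem_maximalIdeal_iff_apply_single
    (hres : ∀ (φ : M →ₗ[R] R) (x : M), φ x - φ (ι (π x)) ∈ maximalIdeal R)
    (φ : M →ₗ[R] R) :
    (∀ x, φ x ∈ maximalIdeal R) ↔ ∀ i, φ (ι (Pi.single i 1)) ∈ maximalIdeal R := by
  refine ⟨fun h i => h _, fun h x => ?_⟩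
  have hι : φ (ι (π x)) ∈ maximalIdeal R := by
    rw [← LinearMap.comp_apply, LinearMap.apply_eq_sum_mul_apply_single]
    exact sum_mem fun i _ => Ideal.mul_mem_left _ _ (h i)
  simpa using add_mem (hres φ x) hι

end Retraction

theorem statement7_general {R : Type*} [CommRing R] [IsLocalRing R]
    {p : ℕ} [Fact p.Prime] [CharP R p]
    (a : ℕ → ℕ) (ha : IsFrobSplittingNumbers R p a)
    (e : ℕ) (Ie : Ideal R) (hIe : (Ie : Set R) = splittingSet R p e) :
    a e = mlength R (FrobMod R p e (R ⧸ Ie)) ∧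
    a e = mlength R ((FrobMod R p e R →ₗ[R] R) ⧸ homIntoMax R p e) := by
  obtain ⟨Fe, Ne, hc, ⟨g⟩, hNe⟩ := ha e
  obtain ⟨π, ι, hπι, hres⟩ := exists_retraction_of_not_hasFreeDirectSummand hc g hNe
  constructor
  · refine (mlength_eq_of_ker_eq_comap (FrobMod.map p e Ie.mkQ) Ie.mkQ_surjective π
      hπι.surjective fun x => ?_).symm
    rw [← forall_apply_mem_maximalIdeal_iff π ι hres]
    exact Ideal.Quotient.eq_zero_iff_mem.trans (Set.ext_iff.1 hIe x)
  · refine (mlength_eq_of_ker_eq_comap _ (homIntoMax R p e).mkQ_surjective _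
      (surjective_pi_applyₗ_single_of_leftInverse hπι) fun φ => ?_).symm
    rw [Submodule.mkQ_apply, Submodule.Quotient.mk_eq_zero]
    exact forall_apply_mem_maximalIdeal_iff_apply_single π ι hres φ

/-- `a_e = length(F^e_*(R/I_e)) = length(Hom(F^e_* R, R)/Hom(F^e_* R, 𝔪))`. -/
theorem statement7 {R : Type*} [CommRing R] [IsNoetherianRing R] [IsLocalRing R]
    {p : ℕ} [Fact p.Prime] [CharP R p] (hfin : FFinite R p)
    (a : ℕ → ℕ) (ha : IsFrobSplittingNumbers R p a)
    (e : ℕ) (Ie : Ideal R) (hIe : (Ie : Set R) = splittingSet R p e) :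
    a e = mlength R (FrobMod R p e (R ⧸ Ie)) ∧
    a e = mlength R ((FrobMod R p e R →ₗ[R] R) ⧸ homIntoMax R p e) :=
  statement7_general a ha e Ie hIe
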